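/- arXiv:2305.17200 — 5 statements merged into one kernel-verified Lean document; each statement's English description precedes it below -/
import Mathlib

section
/- If a family C = {C_1,...,C_n} of closed connected subsets of a topological space X arises from an (A,B)-chain (C_1,...,C_n), then C is a minimal (A,B)-connector; that is, ⋃C is connected, meets both A and B, and no proper subfamily C' ⊊ C has these properties. -/
open Set

def IsABChain {X : Type*} [TopologicalSpace X] (A B : Set X) (n : ℕ) (C : ℕ → Set X) : Prop :=
  (∀ i < n, ((A ∩ C i).Nonempty ↔ i = 0)) ∧
  (∀ j < n, ((B ∩ C j).Nonempty ↔ j = n - 1)) ∧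
  (∀ i < n, ∀ j < n, ((C i ∩ C j).Nonempty ↔ (i ≤ j + 1 ∧ j ≤ i + 1)))

/-- A family `𝒞` of connected subsets of `X` is an `(A,B)`-connector if `⋃₀ 𝒞` is
connected and meets both `A` and `B`. -/
def IsABConnector {X : Type*} [TopologicalSpace X] (A B : Set X) (𝒞 : Set (Set X)) : Prop :=
  (∀ S ∈ 𝒞, IsConnected S) ∧ IsConnected (⋃₀ 𝒞) ∧
    (A ∩ ⋃₀ 𝒞).Nonempty ∧ (B ∩ ⋃₀ 𝒞).Nonempty

/-- A minimal `(A,B)`-connector: no proper subfamily is an `(A,B)`-connector. -/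
def IsMinimalABConnector {X : Type*} [TopologicalSpace X] (A B : Set X) (𝒞 : Set (Set X)) :
    Prop :=
  IsABConnector A B 𝒞 ∧ ∀ 𝒞' ⊆ 𝒞, IsABConnector A B 𝒞' → 𝒞' = 𝒞

theorem chain_is_minimal_connector {X : Type*} [TopologicalSpace X] (A B : Set X)
    (hAB : Disjoint A B) (hA : A.Nonempty) (hB : B.Nonempty)
    (n : ℕ) (hn : 1 ≤ n) (C : ℕ → Set X)
    (hcc : ∀ i < n, IsClosed (C i) ∧ IsConnected (C i))
    (hchain : IsABChain A B n C) :
    IsMinimalABConnector A B {S | ∃ i < n, S = C i} := by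
  obtain ⟨hAC, hBC, hCC⟩ := hchain
  -- basic facts
  have hA0 : (A ∩ C 0).Nonempty := (hAC 0 hn).mpr rfl
  have hBn : (B ∩ C (n-1)).Nonempty :=
    (hBC (n-1) (Nat.sub_lt hn one_pos)).mpr rfl
  have hconsec : ∀ i, i + 1 < n → (C i ∩ C (i+1)).Nonempty := by
    intro i hi
    exact (hCC i (lt_trans (Nat.lt_succ_self i) hi) (i+1) hi).mpr
      ⟨by omega, by omega⟩
  have hinj : ∀ i < n, ∀ j < n, C i = C j → i = j := by
    intro i hi j hj hij
    by_contra hne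
    wlog hlt : i < j generalizing i j
    · exact this j hj i hi hij.symm (Ne.symm hne) (by omega)
    rcases lt_or_ge (i + 1) j with h2 | h2
    · -- |i-j| ≥ 2 : C i ∩ C j = C i nonempty, contradiction
      have : (C i ∩ C j).Nonempty := by
        rw [hij, inter_self]; exact (hcc j hj).2.1
      have := (hCC i hi j hj).mp this
      omega
    · -- j = i+1
      have hj1 : j = i + 1 := by omega
      rcases lt_or_ge (i + 2) n with h3 | h3
      · have : (C i ∩ C (i+2)).Nonempty := by
          rw [hij, hj1]
          exact hconsec (i+1) h3
        have := (hCC i hi (i+2) h3).mp this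
        omega
      · -- i+1 = n-1
        have : (B ∩ C i).Nonempty := by rw [hij, hj1]; exact (hBC (i+1) (hj1 ▸ hj)).mpr (by omega)
        have := (hBC i hi).mp this
        omega
  -- union equals indexed union
  have hsU : ∀ (𝒞' : Set (Set X)), 𝒞' ⊆ {S | ∃ i < n, S = C i} →
      ⋃₀ 𝒞' = ⋃ i ∈ {i | i < n ∧ C i ∈ 𝒞'}, C i := by
    intro 𝒞' hsub
    ext x
    simp only [mem_sUnion, mem_iUnion, mem_setOf_eq, exists_prop]
    constructor
    · rintro ⟨T, hT, hx⟩
      obtain ⟨i, hi, rfl⟩ := hsub hT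
      exact ⟨i, ⟨hi, hT⟩, hx⟩
    · rintro ⟨i, ⟨hi, hT⟩, hx⟩
      exact ⟨C i, hT, hx⟩
  have hUeq : ⋃₀ {S | ∃ i < n, S = C i} = ⋃ i ∈ Finset.range n, C i := by
    ext x
    simp only [mem_sUnion, mem_setOf_eq, mem_iUnion, Finset.mem_range, exists_prop]
    constructor
    · rintro ⟨T, ⟨i, hi, rfl⟩, hx⟩; exact ⟨i, hi, hx⟩
    · rintro ⟨i, hi, hx⟩; exact ⟨C i, ⟨i, hi, rfl⟩, hx⟩
  -- connectedness of partial unions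
  have hconn : ∀ m, 1 ≤ m → m ≤ n → IsConnected (⋃ i ∈ Finset.range m, C i) := by
    intro m hm1 hmn
    induction m with
    | zero => omega
    | succ m ih =>
      rcases Nat.eq_or_lt_of_le hm1 with h1 | h1
      · simp only [← h1, Finset.range_one, Finset.mem_singleton, iUnion_iUnion_eq_left]
        exact (hcc 0 hn).2
      · have hm : 1 ≤ m := by omega
        have ihm := ih hm (by omega)
        rw [Finset.range_add_one]
        have : (⋃ i ∈ insert m (Finset.range m), C i) =
            (⋃ i ∈ Finset.range m, C i) ∪ C m := by
          simp [Finset.set_biUnion_insert, union_comm]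
        rw [this]
        apply ihm.union ?_ ((hcc m (by omega)).2)
        obtain ⟨x, hx1, hx2⟩ := hconsec (m-1) (by omega)
        refine ⟨x, ?_, ?_⟩
        · exact mem_biUnion (Finset.mem_range.mpr (by omega)) hx1
        · have : m - 1 + 1 = m := by omega
          rwa [this] at hx2
  have hconnector : IsABConnector A B {S | ∃ i < n, S = C i} := by
    refine ⟨?_, ?_, ?_, ?_⟩
    · rintro S ⟨i, hi, rfl⟩; exact (hcc i hi).2
    · rw [hUeq]; exact hconn n hn le_rfl
    · obtain ⟨a, ha, hac⟩ := hA0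
      exact ⟨a, ha, C 0, ⟨0, hn, rfl⟩, hac⟩
    · obtain ⟨b, hb, hbc⟩ := hBn
      exact ⟨b, hb, C (n-1), ⟨n-1, Nat.sub_lt hn one_pos, rfl⟩, hbc⟩
  refine ⟨hconnector, ?_⟩
  intro 𝒞' hsub ⟨_, hconn', hA', hB'⟩
  -- C 0 ∈ 𝒞' and C (n-1) ∈ 𝒞'
  have h0mem : C 0 ∈ 𝒞' := by
    obtain ⟨a, ha, T, hT, haT⟩ := hA'
    obtain ⟨i, hi, rfl⟩ := hsub hT
    have : i = 0 := (hAC i hi).mp ⟨a, ha, haT⟩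
    rwa [this] at hT
  have hnmem : C (n-1) ∈ 𝒞' := by
    obtain ⟨b, hb, T, hT, hbT⟩ := hB'
    obtain ⟨i, hi, rfl⟩ := hsub hT
    have : i = n - 1 := (hBC i hi).mp ⟨b, hb, hbT⟩
    rwa [this] at hT
  -- every C k belongs to 𝒞'
  apply Subset.antisymm hsub
  rintro S ⟨k, hk, rfl⟩
  by_contra hknot
  have hk0 : k ≠ 0 := fun h => hknot (h ▸ h0mem)
  have hkn : k ≠ n - 1 := fun h => hknot (h ▸ hnmem)
  have hknotin : ∀ i < n, C i ∈ 𝒞' → i ≠ k := by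
    intro i hi hiC hik
    exact hknot (hinj i hi k hk (hik ▸ rfl) ▸ hiC)
  -- separation
  set U : Set X := ⋃ i ∈ Finset.range k, C i with hU
  set V : Set X := ⋃ i ∈ Finset.Ioo k n, C i with hV
  have hUclosed : IsClosed U := by
    apply Set.Finite.isClosed_biUnion (Finset.finite_toSet _)
    intro i hi
    exact (hcc i (by simp at hi; omega)).1
  have hVclosed : IsClosed V := by
    apply Set.Finite.isClosed_biUnion (Finset.finite_toSet _)
    intro i hi
    simp only [Finset.coe_Ioo, mem_Ioo] at hi
    exact (hcc i hi.2).1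
  have hUV : U ∩ V = ∅ := by
    ext x
    simp only [hU, hV, mem_inter_iff, mem_iUnion, Finset.mem_range, Finset.mem_Ioo,
      exists_prop, mem_empty_iff_false, iff_false, not_and]
    rintro ⟨i, hi, hxi⟩ ⟨j, ⟨hkj, hjn⟩, hxj⟩
    have : (C i ∩ C j).Nonempty := ⟨x, hxi, hxj⟩
    have := (hCC i (by omega) j hjn).mp this
    omega
  have hsubUV : ⋃₀ 𝒞' ⊆ U ∪ V := by
    rintro x ⟨T, hT, hxT⟩
    obtain ⟨i, hi, rfl⟩ := hsub hT
    have hik := hknotin i hi hT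
    rcases lt_or_ge i k with h | h
    · exact Or.inl (mem_biUnion (Finset.mem_range.mpr h) hxT)
    · exact Or.inr (mem_biUnion (Finset.mem_Ioo.mpr ⟨by omega, hi⟩) hxT)
  -- C 0 avoids V, C (n-1) avoids U
  have hC0V : C 0 ∩ V = ∅ := by
    ext x
    simp only [hV, mem_inter_iff, mem_iUnion, Finset.mem_Ioo, exists_prop,
      mem_empty_iff_false, iff_false, not_and]
    rintro hx0 ⟨j, ⟨hkj, hjn⟩, hxj⟩
    have := (hCC 0 hn j hjn).mp ⟨x, hx0, hxj⟩
    omega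
  have hCnU : C (n-1) ∩ U = ∅ := by
    ext x
    simp only [hU, mem_inter_iff, mem_iUnion, Finset.mem_range, exists_prop,
      mem_empty_iff_false, iff_false, not_and]
    rintro hxn ⟨i, hik, hxi⟩
    have := (hCC (n-1) (Nat.sub_lt hn one_pos) i (by omega)).mp ⟨x, hxn, hxi⟩
    omega
  -- derive contradiction from connectedness
  obtain ⟨a0, ha0⟩ := (hcc 0 hn).2.1
  obtain ⟨bn, hbn⟩ := (hcc (n-1) (Nat.sub_lt hn one_pos)).2.1
  have hmem0 : a0 ∈ ⋃₀ 𝒞' := ⟨C 0, h0mem, ha0⟩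
  have hmemn : bn ∈ ⋃₀ 𝒞' := ⟨C (n-1), hnmem, hbn⟩
  have hpre := hconn'.2
  have := hpre Vᶜ Uᶜ hVclosed.isOpen_compl hUclosed.isOpen_compl
    (by intro x _; by_cases hxV : x ∈ V
        · right; intro hxU; exact absurd (mem_inter hxU hxV) (by rw [hUV]; exact notMem_empty x)
        · left; exact hxV)
    ⟨a0, hmem0, fun hv => absurd (mem_inter ha0 hv) (by rw [hC0V]; exact notMem_empty a0)⟩
    ⟨bn, hmemn, fun hu => absurd (mem_inter hbn hu) (by rw [hCnU]; exact notMem_empty bn)⟩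
  obtain ⟨x, hxs, hxV, hxU⟩ := this
  rcases hsubUV hxs with h | h
  · exact hxU h
  · exact hxV h
end

section
/- Every finite minimal (A,B)-connector C consisting of closed connected subsets of a topological space X can be enumerated as C = {C_1,...,C_n} for a unique (A,B)-chain (C_1,...,C_n). -/
open Set

set_option linter.unusedVariables false

lemma conn_chain_union {X : Type*} [TopologicalSpace X] (C : ℕ → Set X) :
    ∀ n, 0 < n → (∀ i < n, IsConnected (C i)) →
    (∀ i, i + 1 < n → (C i ∩ C (i+1)).Nonempty) →
    IsConnected (⋃ i ∈ Finset.range n, C i) := by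
  intro n
  induction n with
  | zero => omega
  | succ n ih =>
    intro _ hconn hcons
    rcases Nat.eq_zero_or_pos n with rfl | hn
    · simpa using hconn 0 (by omega)
    · have h1 : IsConnected (⋃ i ∈ Finset.range n, C i) :=
        ih hn (fun i hi => hconn i (by omega)) (fun i hi => hcons i (by omega))
      have h2 : IsConnected (C n) := hconn n (by omega)
      obtain ⟨x, hx1, hx2⟩ := hcons (n-1) (by omega)
      rw [Finset.range_add_one, Finset.set_biUnion_insert]
      have hx1' : x ∈ ⋃ i ∈ Finset.range n, C i := by
        refine mem_biUnion (Finset.mem_range.2 (by omega)) hx1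
      have hx2' : x ∈ C n := by
        have : n - 1 + 1 = n := by omega
        rwa [this] at hx2
      exact h2.union ⟨x, hx2', hx1'⟩ h1

lemma sUnion_enum {X : Type*} (C : ℕ → Set X) (n : ℕ) :
    ⋃₀ {S | ∃ i < n, S = C i} = ⋃ i ∈ Finset.range n, C i := by
  ext x
  simp only [mem_sUnion, mem_setOf_eq, mem_iUnion, Finset.mem_range]
  constructor
  · rintro ⟨S, ⟨i, hi, rfl⟩, hx⟩; exact ⟨i, hi, hx⟩
  · rintro ⟨i, hi, hx⟩; exact ⟨C i, ⟨i, hi, rfl⟩, hx⟩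

def GoodSeq {X : Type*} (A B : Set X) (𝒞 : Set (Set X)) (n : ℕ) (C : ℕ → Set X) : Prop :=
  0 < n ∧ (∀ i < n, C i ∈ 𝒞) ∧ (∀ i, i + 1 < n → (C i ∩ C (i+1)).Nonempty) ∧
  (A ∩ C 0).Nonempty ∧ (B ∩ C (n-1)).Nonempty

lemma exists_goodSeq {X : Type*} [TopologicalSpace X] (A B : Set X) (𝒞 : Set (Set X))
    (hfin : 𝒞.Finite) (hcc : ∀ S ∈ 𝒞, IsClosed S ∧ IsConnected S)
    (hconn : IsConnected (⋃₀ 𝒞)) (hA : (A ∩ ⋃₀ 𝒞).Nonempty) (hB : (B ∩ ⋃₀ 𝒞).Nonempty) :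
    ∃ n C, GoodSeq A B 𝒞 n C := by
  classical
  set 𝒟 : Set (Set X) := {S | S ∈ 𝒞 ∧ ∃ (n : ℕ) (C : ℕ → Set X), 0 < n ∧ (∀ i < n, C i ∈ 𝒞) ∧
    (∀ i, i + 1 < n → (C i ∩ C (i+1)).Nonempty) ∧ (A ∩ C 0).Nonempty ∧ C (n-1) = S} with h𝒟
  have hD1 : 𝒟 ⊆ 𝒞 := fun S hS => hS.1
  obtain ⟨a, haA, S₀, hS₀, haS₀⟩ := hA
  have hS₀D : S₀ ∈ 𝒟 := ⟨hS₀, 1, fun _ => S₀, by omega, fun i _ => hS₀,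
    fun i hi => by omega, ⟨a, haA, haS₀⟩, rfl⟩
  -- sUnions are disjoint
  have hdisj : ∀ x, x ∈ ⋃₀ 𝒟 → x ∈ ⋃₀ (𝒞 \ 𝒟) → False := by
    rintro x ⟨S, hSD, hxS⟩ ⟨T, hTD, hxT⟩
    obtain ⟨hS𝒞, n, C, hn, hmem, hcons, hA0, hend⟩ := hSD
    apply hTD.2
    refine ⟨hTD.1, n + 1, fun k => if k < n then C k else T, by omega, ?_, ?_, ?_, ?_⟩
    · intro i hi
      by_cases h : i < n
      · simpa [h] using hmem i h
      · simpa [h] using hTD.1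
    · intro i hi
      by_cases h : i + 1 < n
      · simp only [if_pos (by omega : i < n), if_pos h]
        exact hcons i h
      · have hi' : i = n - 1 := by omega
        subst hi'
        simp only [if_pos (by omega : n - 1 < n), if_neg (by omega : ¬ n - 1 + 1 < n)]
        exact ⟨x, hend ▸ hxS, hxT⟩
    · simpa [if_pos hn] using hA0
    · simp only [Nat.add_sub_cancel, if_neg (by omega : ¬ n < n)]
  -- both unions are closed
  have hclosedD : IsClosed (⋃₀ 𝒟) := by
    rw [sUnion_eq_biUnion]
    exact Set.Finite.isClosed_biUnion (hfin.subset hD1) (fun S hS => (hcc S (hD1 hS)).1)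
  have hclosedD' : IsClosed (⋃₀ (𝒞 \ 𝒟)) := by
    rw [sUnion_eq_biUnion]
    exact Set.Finite.isClosed_biUnion (hfin.subset diff_subset)
      (fun S hS => (hcc S hS.1).1)
  have hcover : ⋃₀ 𝒞 ⊆ ⋃₀ 𝒟 ∪ ⋃₀ (𝒞 \ 𝒟) := by
    rw [← sUnion_union, union_diff_cancel hD1]
  have hCD : 𝒞 ⊆ 𝒟 := by
    by_contra hcon
    obtain ⟨T, hT𝒞, hTD⟩ := not_subset.1 hcon
    obtain ⟨t, ht⟩ := (hcc T hT𝒞).2.nonempty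
    have h1 : (⋃₀ 𝒞 ∩ ⋃₀ 𝒟).Nonempty := ⟨a, ⟨S₀, hS₀, haS₀⟩, ⟨S₀, hS₀D, haS₀⟩⟩
    have h2 : (⋃₀ 𝒞 ∩ ⋃₀ (𝒞 \ 𝒟)).Nonempty := ⟨t, ⟨T, hT𝒞, ht⟩, ⟨T, ⟨hT𝒞, hTD⟩, ht⟩⟩
    obtain ⟨x, _, hx1, hx2⟩ := isPreconnected_closed_iff.1 hconn.isPreconnected
      (⋃₀ 𝒟) (⋃₀ (𝒞 \ 𝒟)) hclosedD hclosedD' hcover h1 h2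
    exact hdisj x hx1 hx2
  obtain ⟨b, hbB, S₁, hS₁, hbS₁⟩ := hB
  obtain ⟨_, n, C, hn, hmem, hcons, hA0, hend⟩ := hCD hS₁
  exact ⟨n, C, hn, hmem, hcons, hA0, ⟨b, hbB, hend ▸ hbS₁⟩⟩

/-- Every finite minimal `(A,B)`-connector consisting of closed connected sets is
enumerated by a unique `(A,B)`-chain. -/
theorem minimal_connector_eq_chain {X : Type*} [TopologicalSpace X] (A B : Set X)
    (hAB : Disjoint A B) (hA : A.Nonempty) (hB : B.Nonempty)
    (𝒞 : Set (Set X)) (hfin : 𝒞.Finite)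
    (hcc : ∀ S ∈ 𝒞, IsClosed S ∧ IsConnected S)
    (hmin : IsMinimalABConnector A B 𝒞) :
    ∃ n : ℕ, ∃ C : ℕ → Set X, IsABChain A B n C ∧ {S | ∃ i < n, S = C i} = 𝒞 ∧
      ∀ m : ℕ, ∀ D : ℕ → Set X, IsABChain A B m D → {S | ∃ i < m, S = D i} = 𝒞 →
        m = n ∧ ∀ i < n, D i = C i := by
  classical
  obtain ⟨⟨helts, hUconn, hAU, hBU⟩, hminimal⟩ := hmin
  have hex : ∃ n, ∃ C : ℕ → Set X, GoodSeq A B 𝒞 n C :=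
    exists_goodSeq A B 𝒞 hfin hcc hUconn hAU hBU
  set n₀ := Nat.find hex with hn₀def
  obtain ⟨C, hC⟩ := Nat.find_spec hex
  have hmin_n : ∀ m, m < n₀ → ¬ ∃ D : ℕ → Set X, GoodSeq A B 𝒞 m D :=
    fun m hm => Nat.find_min hex hm
  obtain ⟨hn0pos, hmemC, hconsC, hA0, hBend⟩ := hC
  -- (a) A meets only C 0
  have hAonly : ∀ i, 0 < i → i < n₀ → ¬ (A ∩ C i).Nonempty := by
    intro i hi hi' h
    refine hmin_n (n₀ - i) (by omega) ⟨fun k => C (k + i), by omega,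
      fun k hk => hmemC (k + i) (by omega), ?_, by simpa using h, ?_⟩
    · intro k hk
      have h2 := hconsC (k + i) (by omega)
      simpa [show k + 1 + i = k + i + 1 from by omega] using h2
    · have he : n₀ - i - 1 + i = n₀ - 1 := by omega
      simpa only [he] using hBend
  -- (b) B meets only C (n₀ - 1)
  have hBonly : ∀ j, j < n₀ - 1 → ¬ (B ∩ C j).Nonempty := by
    intro j hj h
    exact hmin_n (j + 1) (by omega) ⟨C, by omega, fun k hk => hmemC k (by omega),
      fun k hk => hconsC k (by omega), hA0, by simpa using h⟩
  -- (c) no far intersections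
  have hno_far : ∀ i j, j < n₀ → i + 1 < j → ¬ (C i ∩ C j).Nonempty := by
    intro i j hj hij h
    set d := j - i - 1 with hd
    refine hmin_n (n₀ - d) (by omega) ⟨fun k => if k ≤ i then C k else C (k + d),
      by omega, ?_, ?_, ?_, ?_⟩
    · intro k hk
      by_cases h1 : k ≤ i
      · simpa [h1] using hmemC k (by omega)
      · simpa [h1] using hmemC (k + d) (by omega)
    · intro k hk
      rcases Nat.lt_trichotomy (k + 1) (i + 1) with h1 | h1 | h1
      · simp only [if_pos (by omega : k ≤ i), if_pos (by omega : k + 1 ≤ i)]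
        exact hconsC k (by omega)
      · have hki : k = i := by omega
        subst hki
        simp only [if_pos (le_refl k), if_neg (by omega : ¬ k + 1 ≤ k)]
        have : k + 1 + d = j := by omega
        simpa only [this] using h
      · simp only [if_neg (by omega : ¬ k ≤ i), if_neg (by omega : ¬ k + 1 ≤ i)]
        have h2 := hconsC (k + d) (by omega)
        simpa [show k + 1 + d = k + d + 1 from by omega] using h2
    · simpa [if_pos (by omega : 0 ≤ i)] using hA0
    · have h1 : ¬ (n₀ - d - 1 ≤ i) := by omega
      simp only [if_neg h1]
      have he : n₀ - d - 1 + d = n₀ - 1 := by omega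
      simpa only [he] using hBend
  -- (d) injectivity
  have hinj : ∀ i j, i < j → j < n₀ → C i ≠ C j := by
    intro i j hij hj heq
    set d := j - i with hd
    refine hmin_n (n₀ - d) (by omega) ⟨fun k => if k < i then C k else C (k + d),
      by omega, ?_, ?_, ?_, ?_⟩
    · intro k hk
      by_cases h1 : k < i
      · simpa [h1] using hmemC k (by omega)
      · simpa [h1] using hmemC (k + d) (by omega)
    · intro k hk
      rcases Nat.lt_trichotomy (k + 1) i with h1 | h1 | h1
      · simp only [if_pos (by omega : k < i), if_pos h1]
        exact hconsC k (by omega)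
      · simp only [if_pos (by omega : k < i), if_neg (by omega : ¬ k + 1 < i)]
        have h2 : k + 1 + d = j := by omega
        rw [h2, ← heq]
        have h3 := hconsC k (by omega)
        rwa [show k + 1 = i from h1] at h3
      · simp only [if_neg (by omega : ¬ k < i), if_neg (by omega : ¬ k + 1 < i)]
        have h2 := hconsC (k + d) (by omega)
        simpa [show k + 1 + d = k + d + 1 from by omega] using h2
    · rcases Nat.eq_zero_or_pos i with rfl | hi
      · simp only [if_neg (by omega : ¬ (0:ℕ) < 0), Nat.zero_add]
        have : d = j := by omega
        simpa only [this, ← heq] using hA0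
      · simpa [if_pos hi] using hA0
    · have h1 : ¬ (n₀ - d - 1 < i) := by omega
      simp only [if_neg h1]
      have he : n₀ - d - 1 + d = n₀ - 1 := by omega
      simpa only [he] using hBend
  -- the chain
  have hchain : IsABChain A B n₀ C := by
    refine ⟨?_, ?_, ?_⟩
    · intro i hi
      constructor
      · intro h
        by_contra h0
        exact hAonly i (by omega) hi h
      · rintro rfl; exact hA0
    · intro j hj
      constructor
      · intro h
        by_contra h0
        exact hBonly j (by omega) h
      · rintro rfl; exact hBend
    · intro i hi j hj
      constructor
      · intro h
        constructor
        · by_contra h1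
          exact hno_far j i hi (by omega) ⟨h.choose, h.choose_spec.2, h.choose_spec.1⟩
        · by_contra h1
          exact hno_far i j hj (by omega) h
      · rintro ⟨h1, h2⟩
        rcases Nat.lt_trichotomy i j with h3 | h3 | h3
        · have : j = i + 1 := by omega
          subst this
          exact hconsC i hj
        · subst h3
          simpa [inter_self] using (helts _ (hmemC i hi)).nonempty
        · have : i = j + 1 := by omega
          subst this
          obtain ⟨x, hx1, hx2⟩ := hconsC j hi
          exact ⟨x, hx2, hx1⟩
  -- enumeration equals 𝒞
  have hE : {S | ∃ i < n₀, S = C i} = 𝒞 := by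
    refine hminimal _ (fun S hS => ?_) ⟨fun S hS => ?_, ?_, ?_, ?_⟩
    · obtain ⟨i, hi, rfl⟩ := hS; exact hmemC i hi
    · obtain ⟨i, hi, rfl⟩ := hS; exact helts _ (hmemC i hi)
    · rw [sUnion_enum]
      exact conn_chain_union C n₀ hn0pos (fun i hi => helts _ (hmemC i hi)) hconsC
    · obtain ⟨a, ha1, ha2⟩ := hA0
      exact ⟨a, ha1, C 0, ⟨0, hn0pos, rfl⟩, ha2⟩
    · obtain ⟨b, hb1, hb2⟩ := hBend
      exact ⟨b, hb1, C (n₀ - 1), ⟨n₀ - 1, by omega, rfl⟩, hb2⟩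
  -- cardinality
  have hcard : 𝒞.ncard = n₀ := by
    have him : C '' (Set.Iio n₀) = 𝒞 := by
      rw [← hE]; ext S
      simp only [mem_image, mem_Iio, mem_setOf_eq]
      exact ⟨fun ⟨i, hi, h⟩ => ⟨i, hi, h.symm⟩, fun ⟨i, hi, h⟩ => ⟨i, hi, h.symm⟩⟩
    have hinj' : Set.InjOn C (Set.Iio n₀) := by
      intro i hi j hj h
      by_contra hne
      rcases Nat.lt_or_ge i j with h1 | h1
      · exact hinj i j h1 hj h
      · exact hinj j i (by omega) hi h.symm
    rw [← him, Set.ncard_image_of_injOn hinj', ← Finset.coe_range,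
      Set.ncard_coe_finset, Finset.card_range]
  refine ⟨n₀, C, hchain, hE, ?_⟩
  intro m D hD hDset
  obtain ⟨hDA, hDB, hDint⟩ := hD
  have hm : 0 < m := by
    by_contra h
    have h0 : m = 0 := by omega
    subst h0
    have hc : C 0 ∈ 𝒞 := hmemC 0 hn0pos
    rw [← hDset] at hc
    obtain ⟨i, hi, _⟩ := hc
    omega
  have hDne : ∀ i, i < m → (D i).Nonempty := by
    intro i hi
    have h := (hDint i hi i hi).2 ⟨by omega, by omega⟩
    simpa [inter_self] using h
  have hDinj : ∀ i j, i < j → j < m → D i ≠ D j := by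
    intro i j hij hj heq
    by_cases h2 : i + 1 < j
    · have h3 : (D i ∩ D j).Nonempty := by rw [heq, inter_self]; exact hDne j hj
      have := (hDint i (by omega) j hj).1 h3
      omega
    · have hji : j = i + 1 := by omega
      subst hji
      by_cases h3 : i + 2 < m
      · have h4 : (D (i+1) ∩ D (i+2)).Nonempty :=
          (hDint (i+1) hj (i+2) h3).2 ⟨by omega, by omega⟩
        rw [← heq] at h4
        have := (hDint i (by omega) (i+2) h3).1 h4
        omega
      · have h5 : i + 1 = m - 1 := by omega
        have h6 : (B ∩ D (i+1)).Nonempty := (hDB (i+1) hj).2 h5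
        rw [← heq] at h6
        have := (hDB i (by omega)).1 h6
        omega
  have hcardD : 𝒞.ncard = m := by
    have him : D '' (Set.Iio m) = 𝒞 := by
      rw [← hDset]; ext S
      simp only [mem_image, mem_Iio, mem_setOf_eq]
      exact ⟨fun ⟨i, hi, h⟩ => ⟨i, hi, h.symm⟩, fun ⟨i, hi, h⟩ => ⟨i, hi, h.symm⟩⟩
    have hinj' : Set.InjOn D (Set.Iio m) := by
      intro i hi j hj h
      by_contra hne
      rcases Nat.lt_or_ge i j with h1 | h1
      · exact hDinj i j h1 hj h
      · exact hDinj j i (by omega) hi h.symm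
    rw [← him, Set.ncard_image_of_injOn hinj', ← Finset.coe_range,
      Set.ncard_coe_finset, Finset.card_range]
  have hmn : m = n₀ := by rw [← hcardD, hcard]
  subst hmn
  refine ⟨rfl, ?_⟩
  intro i
  induction i using Nat.strong_induction_on with
  | _ i ih =>
    intro hi
    have hDi𝒞 : D i ∈ 𝒞 := by rw [← hDset]; exact ⟨i, hi, rfl⟩
    rw [← hE] at hDi𝒞
    obtain ⟨j, hj, hDij⟩ := hDi𝒞
    rcases Nat.eq_zero_or_pos i with rfl | hi0
    · have hA0D : (A ∩ D 0).Nonempty := (hDA 0 hi).2 rfl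
      rw [hDij] at hA0D
      have hj0 := (hchain.1 j hj).1 hA0D
      subst hj0; exact hDij
    · set i' := i - 1 with hi'
      have hii' : i = i' + 1 := by omega
      have hD' : D i' = C i' := ih i' (by omega) (by omega)
      have hadj : (D i' ∩ D i).Nonempty := (hDint i' (by omega) i hi).2 ⟨by omega, by omega⟩
      rw [hD', hDij] at hadj
      have hjr := (hchain.2.2 i' (by omega) j hj).1 hadj
      have hcases : j = i' + 1 ∨ j = i' ∨ (1 ≤ i' ∧ j = i' - 1) := by omega
      rcases hcases with h | h | ⟨h1, h⟩
      · rw [hDij, h, ← hii']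
      · exfalso
        apply hDinj i' i (by omega) hi
        rw [hD', hDij, h]
      · exfalso
        apply hDinj (i'-1) i (by omega) hi
        rw [ih (i'-1) (by omega) (by omega), hDij, h]
end

section
/- In the uniqueness part of the chain representation: if (C_1,...,C_n) and (C'_1,...,C'_m) are two (A,B)-chains enumerating the same finite family of sets, then n = m and C_i = C'_i for all i. -/
open Set

lemma chain_ne {X : Type*} [TopologicalSpace X] (A B : Set X) (n : ℕ) (C : ℕ → Set X)
    (hC : IsABChain A B n C) : ∀ i < n, ∀ j < n, C i = C j → i = j := by
  obtain ⟨h1, h2, h3⟩ := hC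
  have hne : ∀ i < n, (C i).Nonempty := by
    intro i hi
    have := (h3 i hi i hi).mpr ⟨by omega, by omega⟩
    simpa using this
  have key : ∀ i < n, ∀ j < n, j = i + 1 → C i ≠ C j := by
    intro i hi j hj hij heq
    by_cases hjn : j = n - 1
    · have hBj : (B ∩ C j).Nonempty := (h2 j hj).mpr hjn
      have hBi : (B ∩ C i).Nonempty := by rw [heq]; exact hBj
      have := (h2 i hi).mp hBi
      omega
    · have hj1 : j + 1 < n := by omega
      have hadj : (C j ∩ C (j + 1)).Nonempty := (h3 j hj (j + 1) hj1).mpr ⟨by omega, by omega⟩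
      have := (h3 i hi (j + 1) hj1).mp (by rw [heq]; exact hadj)
      omega
  intro i hi j hj heq
  by_contra hne'
  have hint : (C i ∩ C j).Nonempty := by
    rw [heq, inter_self]; exact hne j hj
  have hd := (h3 i hi j hj).mp hint
  rcases (by omega : j = i + 1 ∨ i = j + 1) with h | h
  · exact key i hi j hj h heq
  · exact key j hj i hi h heq.symm

lemma chain_step {X : Type*} [TopologicalSpace X] (A B : Set X) (n m : ℕ) (C D : ℕ → Set X)
    (hC : IsABChain A B n C) (hD : IsABChain A B m D)
    (hf : ∀ i < n, ∃ j < m, C i = D j) :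
    ∀ i < n, i < m ∧ C i = D i := by
  have hinjC := chain_ne A B n C hC
  intro i
  induction i using Nat.strong_induction_on with
  | _ i ih =>
  intro hi
  obtain ⟨j, hj, hCD⟩ := hf i hi
  suffices hji : j = i by exact ⟨hji ▸ hj, hji ▸ hCD⟩
  rcases Nat.eq_zero_or_pos i with h0 | hpos
  · subst h0
    have hA : (A ∩ C 0).Nonempty := (hC.1 0 hi).mpr rfl
    rw [hCD] at hA
    exact (hD.1 j hj).mp hA
  · obtain ⟨k, rfl⟩ : ∃ k, i = k + 1 := ⟨i - 1, by omega⟩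
    have hk := ih k (by omega) (by omega)
    have hadj : (C k ∩ C (k + 1)).Nonempty :=
      (hC.2.2 k (by omega) (k + 1) hi).mpr ⟨by omega, by omega⟩
    have hadj' : (D k ∩ D j).Nonempty := by rw [← hk.2, ← hCD]; exact hadj
    have hd := (hD.2.2 k hk.1 j hj).mp hadj'
    by_contra hne'
    have hjk : j ≤ k := by omega
    have hl' := ih j (by omega) (by omega)
    have heq : C (k + 1) = C j := by rw [hCD, hl'.2]
    have := hinjC (k + 1) hi j (by omega) heq
    omega

/-- Two `(A,B)`-chains enumerating the same family of sets coincide. -/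
theorem chain_unique {X : Type*} [TopologicalSpace X] (A B : Set X)
    (hAB : Disjoint A B) (hA : A.Nonempty) (hB : B.Nonempty)
    (n m : ℕ) (hn : 1 ≤ n) (hm : 1 ≤ m) (C D : ℕ → Set X)
    (hC : IsABChain A B n C) (hD : IsABChain A B m D)
    (hEq : {S | ∃ i < n, S = C i} = {S | ∃ j < m, S = D j}) :
    n = m ∧ ∀ i < n, C i = D i := by
  have hf : ∀ i < n, ∃ j < m, C i = D j := by
    intro i hi
    have : C i ∈ {S | ∃ j < m, S = D j} := by rw [← hEq]; exact ⟨i, hi, rfl⟩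
    exact this
  have hg : ∀ j < m, ∃ i < n, D j = C i := by
    intro j hj
    have : D j ∈ {S | ∃ i < n, S = C i} := by rw [hEq]; exact ⟨j, hj, rfl⟩
    exact this
  have k1 := chain_step A B n m C D hC hD hf
  have k2 := chain_step A B m n D C hD hC hg
  have hnm : n = m := by
    have h1 := (k1 (n - 1) (by omega)).1
    have h2 := (k2 (m - 1) (by omega)).1
    omega
  exact ⟨hnm, fun i hi => (k1 i hi).2⟩
end

section
/- If A is a connected subset of a metric space X and F_n (n ≥ N) are covers of X by connected subsets with mesh(F_n) ≤ 2^{-n}, then the iterated star F*_{N,ω}[A] obtained by successively taking stars with respect to F_N, F_{N+1}, F_{N+2}, ... is a connected set of diameter at most diam(A) + 4·2^{-N}. -/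
open Set Metric

/-- The star of a set `A` with respect to a family `𝒢`: the union of all members of `𝒢`
meeting `A`. -/
def star' {X : Type*} (𝒢 : Set (Set X)) (A : Set X) : Set X :=
  ⋃₀ {F | F ∈ 𝒢 ∧ (F ∩ A).Nonempty}

/-- Iterated stars: `iterStar ℱ N A m = ℱ*_{N,N+m}[A]`, obtained by successively
taking stars with respect to `ℱ N, ℱ (N+1), …, ℱ (N+m)`. -/
def iterStar {X : Type*} (ℱ : ℕ → Set (Set X)) (N : ℕ) (A : Set X) : ℕ → Set X
  | 0 => star' (ℱ N) A
  | m + 1 => star' (ℱ (N + m + 1)) (iterStar ℱ N A m)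

lemma star'_subset_self {X : Type*} {𝒢 : Set (Set X)} (hcov : ⋃₀ 𝒢 = Set.univ)
    (A : Set X) : A ⊆ star' 𝒢 A := by
  intro x hx
  have hx' : x ∈ ⋃₀ 𝒢 := by rw [hcov]; trivial
  obtain ⟨F, hF, hxF⟩ := hx'
  exact ⟨F, ⟨hF, ⟨x, hxF, hx⟩⟩, hxF⟩

lemma star'_connected {X : Type*} [TopologicalSpace X] {𝒢 : Set (Set X)}
    (hcov : ⋃₀ 𝒢 = Set.univ) (hconn : ∀ F ∈ 𝒢, IsConnected F)
    {A : Set X} (hA : IsConnected A) : IsConnected (star' 𝒢 A) := by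
  obtain ⟨a, ha⟩ := hA.nonempty
  set S := {F | F ∈ 𝒢 ∧ (F ∩ A).Nonempty} with hS
  have hEq : star' 𝒢 A = ⋃ F : S, ((F : Set X) ∪ A) := by
    apply Set.Subset.antisymm
    · rintro x ⟨F, hF, hxF⟩
      exact Set.mem_iUnion.2 ⟨⟨F, hF⟩, Or.inl hxF⟩
    · rintro x hx
      obtain ⟨⟨F, hF⟩, hxF⟩ := Set.mem_iUnion.1 hx
      rcases hxF with h | h
      · exact ⟨F, hF, h⟩
      · exact star'_subset_self hcov A h
  have hmem : ∀ F : S, a ∈ (F : Set X) ∪ A := fun F => Or.inr ha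
  have ha' : a ∈ ⋃₀ 𝒢 := by rw [hcov]; trivial
  obtain ⟨F₀, hF₀, haF₀⟩ := ha'
  have hne : Nonempty S := ⟨⟨F₀, hF₀, ⟨a, haF₀, ha⟩⟩⟩
  rw [hEq]
  constructor
  · exact ⟨a, Set.mem_iUnion.2 ⟨Classical.arbitrary S, hmem _⟩⟩
  · apply isPreconnected_iUnion
    · exact ⟨a, Set.mem_iInter.2 hmem⟩
    · rintro ⟨F, hF, b, hbF, hbA⟩
      exact IsPreconnected.union b hbF hbA (hconn F hF).isPreconnected hA.isPreconnected

lemma star'_diam {X : Type*} [MetricSpace X] {𝒢 : Set (Set X)} {D : ENNReal}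
    (hD : ∀ F ∈ 𝒢, EMetric.diam F ≤ D) (A : Set X) :
    EMetric.diam (star' 𝒢 A) ≤ EMetric.diam A + 2 * D := by
  apply EMetric.diam_le
  rintro x ⟨F, ⟨hF, a, haF, haA⟩, hxF⟩ y ⟨G, ⟨hG, b, hbG, hbA⟩, hyG⟩
  calc edist x y ≤ edist x a + edist a b + edist b y := edist_triangle4 x a b y
  _ ≤ D + EMetric.diam A + D := by
      gcongr
      · exact le_trans (EMetric.edist_le_diam_of_mem hxF haF) (hD F hF)
      · exact EMetric.edist_le_diam_of_mem haA hbA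
      · exact le_trans (EMetric.edist_le_diam_of_mem hbG hyG) (hD G hG)
  _ = EMetric.diam A + 2 * D := by ring

theorem iterStar_connected_diam {X : Type*} [MetricSpace X]
    (ℱ : ℕ → Set (Set X)) (N : ℕ)
    (hcover : ∀ n ≥ N, ⋃₀ (ℱ n) = Set.univ)
    (hconn : ∀ n ≥ N, ∀ F ∈ ℱ n, IsConnected F)
    (hmesh : ∀ n ≥ N, ∀ F ∈ ℱ n, EMetric.diam F ≤ ENNReal.ofReal ((2:ℝ)⁻¹ ^ n))
    (A : Set X) (hA : IsConnected A) :
    IsConnected (⋃ m : ℕ, iterStar ℱ N A m) ∧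
      EMetric.diam (⋃ m : ℕ, iterStar ℱ N A m) ≤
        EMetric.diam A + ENNReal.ofReal (4 * (2:ℝ)⁻¹ ^ N) := by
  set q : ℝ := (2:ℝ)⁻¹ with hq
  -- basic facts
  have hsub : ∀ m, iterStar ℱ N A m ⊆ iterStar ℱ N A (m + 1) := by
    intro m
    exact star'_subset_self (hcover (N + m + 1) (by omega)) _
  have hmono : ∀ m k, m ≤ k → iterStar ℱ N A m ⊆ iterStar ℱ N A k := by
    intro m k hmk
    induction k with
    | zero => simp [Nat.le_zero.1 hmk]
    | succ k ih =>
      rcases Nat.lt_or_ge m (k + 1) with h | h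
      · exact (ih (by omega)).trans (hsub k)
      · have : m = k + 1 := by omega
        simp [this]
  have hAsub : A ⊆ iterStar ℱ N A 0 := star'_subset_self (hcover N le_rfl) A
  -- connectedness of each stage
  have hconn' : ∀ m, IsConnected (iterStar ℱ N A m) := by
    intro m
    induction m with
    | zero => exact star'_connected (hcover N le_rfl) (hconn N le_rfl) hA
    | succ m ih =>
      exact star'_connected (hcover (N + m + 1) (by omega)) (hconn (N + m + 1) (by omega)) ih
  -- diameter bound for each stage
  have hqpos : (0:ℝ) < q := by norm_num [hq]
  have hq1 : q ≤ 1 := by norm_num [hq]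
  have hnonneg : ∀ m, (0:ℝ) ≤ 4 * q ^ N - 2 * q ^ (N + m) := by
    intro m
    have h1 : q ^ (N + m) ≤ q ^ N :=
      pow_le_pow_of_le_one hqpos.le hq1 (by omega)
    have h2 : (0:ℝ) ≤ q ^ N := by positivity
    nlinarith
  have hdiam : ∀ m, EMetric.diam (iterStar ℱ N A m) ≤
      EMetric.diam A + ENNReal.ofReal (4 * q ^ N - 2 * q ^ (N + m)) := by
    intro m
    induction m with
    | zero =>
      have h := star'_diam (hmesh N le_rfl) A
      refine h.trans ?_
      have : 2 * ENNReal.ofReal (q ^ N) = ENNReal.ofReal (4 * q ^ N - 2 * q ^ (N + 0)) := by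
        rw [show (4:ℝ) * q ^ N - 2 * q ^ (N + 0) = 2 * q ^ N by ring,
          ENNReal.ofReal_mul (by norm_num)]
        norm_num
      rw [this]
    | succ m ih =>
      have h := star'_diam (hmesh (N + m + 1) (by omega)) (iterStar ℱ N A m)
      refine le_trans (by exact h) ?_
      calc EMetric.diam (iterStar ℱ N A m) + 2 * ENNReal.ofReal (q ^ (N + m + 1))
          ≤ (EMetric.diam A + ENNReal.ofReal (4 * q ^ N - 2 * q ^ (N + m)))
              + 2 * ENNReal.ofReal (q ^ (N + m + 1)) := by gcongr
        _ = EMetric.diam A + ENNReal.ofReal (4 * q ^ N - 2 * q ^ (N + (m + 1))) := by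
            rw [add_assoc]
            congr 1
            rw [show 2 * ENNReal.ofReal (q ^ (N + m + 1))
                = ENNReal.ofReal (2 * q ^ (N + m + 1)) by
                  rw [ENNReal.ofReal_mul (by norm_num)]; norm_num,
              ← ENNReal.ofReal_add (hnonneg m) (by positivity)]
            congr 1
            have : N + (m + 1) = N + m + 1 := by ring
            rw [this]
            field_simp [hq]
            ring
  -- conclusion
  obtain ⟨a, ha⟩ := hA.nonempty
  have haIter : ∀ m, a ∈ iterStar ℱ N A m := fun m => hmono 0 m (Nat.zero_le m) (hAsub ha)
  constructor
  · constructor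
    · exact ⟨a, Set.mem_iUnion.2 ⟨0, haIter 0⟩⟩
    · apply isPreconnected_iUnion
      · exact ⟨a, Set.mem_iInter.2 haIter⟩
      · exact fun m => (hconn' m).isPreconnected
  · apply EMetric.diam_le
    intro x hx y hy
    obtain ⟨m, hm⟩ := Set.mem_iUnion.1 hx
    obtain ⟨k, hk⟩ := Set.mem_iUnion.1 hy
    have hx' : x ∈ iterStar ℱ N A (max m k) := hmono m _ (le_max_left m k) hm
    have hy' : y ∈ iterStar ℱ N A (max m k) := hmono k _ (le_max_right m k) hk
    calc edist x y ≤ EMetric.diam (iterStar ℱ N A (max m k)) :=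
          EMetric.edist_le_diam_of_mem hx' hy'
      _ ≤ EMetric.diam A + ENNReal.ofReal (4 * q ^ N - 2 * q ^ (N + max m k)) :=
          hdiam (max m k)
      _ ≤ EMetric.diam A + ENNReal.ofReal (4 * q ^ N) := by
          gcongr
          nlinarith [pow_nonneg hqpos.le (N + max m k)]
end

section
/- For every metric Peano continuum X of diameter at most 1, there exists a sequence (C_n)_{n∈ω} of finite covers of X by closed connected subsets such that C_0 = {X} and for every n ≥ 1: (1) |C_n| ≤ S_X(2^{-n}); (2) mesh(C_n) ≤ 3·2^{-n}; (3) every C ∈ C_{n-1} equals the union of those members of C_n contained in C. -/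
set_option linter.unusedSectionVars false
set_option linter.unusedVariables false

open Set Metric

section Aux

variable {X : Type*} [MetricSpace X]

/-- depth-`m` descendants of a set `A` at level `n` through the covers `D`. -/
def descAux (D : ℕ → Finset (Set X)) : ℕ → Set X → ℕ → Set (Set X)
  | _, A, 0 => {A}
  | n, A, (m+1) => {F | F ∈ D (n+m+1) ∧ ∃ B ∈ descAux D n A m, (B ∩ F).Nonempty}

/-- chain saturation of `A` at level `n`. -/
def SsetAux (D : ℕ → Finset (Set X)) (n : ℕ) (A : Set X) : Set X :=
  ⋃ m, ⋃₀ (descAux D n A m)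

/-- closed chain saturation. -/
def TsetAux (D : ℕ → Finset (Set X)) (n : ℕ) (A : Set X) : Set X :=
  closure (SsetAux D n A)

variable {D : ℕ → Finset (Set X)} {n : ℕ} {A : Set X}

lemma subset_SsetAux : A ⊆ SsetAux D n A := fun x hx =>
  mem_iUnion.2 ⟨0, ⟨A, rfl, hx⟩⟩

lemma mem_SsetAux_of_desc {m : ℕ} {F : Set X} (hF : F ∈ descAux D n A m) :
    F ⊆ SsetAux D n A := fun x hx => mem_iUnion.2 ⟨m, ⟨F, hF, hx⟩⟩

lemma mem_descAux_zero {F : Set X} : F ∈ descAux D n A 0 ↔ F = A := Iff.rfl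

lemma mem_descAux_succ {m : ℕ} {F : Set X} :
    F ∈ descAux D n A (m+1) ↔
      F ∈ D (n+m+1) ∧ ∃ B ∈ descAux D n A m, (B ∩ F).Nonempty := Iff.rfl

lemma descAux_succ_eq (D : ℕ → Finset (Set X)) (n : ℕ) (A : Set X) (m : ℕ) :
    descAux D n A (m+1) =
      ⋃ E ∈ {E : Set X | E ∈ D (n+1) ∧ (A ∩ E).Nonempty}, descAux D (n+1) E m := by
  induction m with
  | zero =>
    ext F
    simp only [mem_iUnion, mem_setOf_eq, exists_prop, mem_descAux_succ, mem_descAux_zero]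
    constructor
    · rintro ⟨hF, B, rfl, hne⟩
      exact ⟨F, ⟨hF, hne⟩, rfl⟩
    · rintro ⟨E, ⟨hE, hne⟩, rfl⟩
      exact ⟨hE, A, rfl, hne⟩
  | succ m ih =>
    ext F
    simp only [mem_iUnion, mem_setOf_eq, exists_prop, mem_descAux_succ]
    constructor
    · rintro ⟨hF, B, hB, hne⟩
      have hB' : B ∈ descAux D n A (m+1) := hB
      rw [ih] at hB'
      simp only [mem_iUnion, mem_setOf_eq, exists_prop] at hB'
      obtain ⟨E, hE, hBE⟩ := hB' 
      refine ⟨E, hE, ?_, B, hBE, hne⟩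
      rwa [show n+1+m+1 = n+(m+1)+1 from by omega]
    · rintro ⟨E, hE, hFD, B, hB, hne⟩
      refine ⟨?_, B, ?_, hne⟩
      · rwa [show n+(m+1)+1 = n+1+m+1 from by omega]
      · show B ∈ descAux D n A (m+1)
        rw [ih]
        simp only [mem_iUnion, mem_setOf_eq, exists_prop]
        exact ⟨E, hE, hB⟩

lemma SsetAux_eq (hDcover : ∀ k, ⋃₀ ((D k : Set (Set X))) = Set.univ) (n : ℕ) (A : Set X) :
    SsetAux D n A =
      ⋃ E ∈ {E : Set X | E ∈ D (n+1) ∧ (A ∩ E).Nonempty}, SsetAux D (n+1) E := by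
  apply Subset.antisymm
  · intro x hx
    obtain ⟨m, F, hF, hxF⟩ := by simpa only [SsetAux, mem_iUnion, mem_sUnion] using hx
    cases m with
    | zero =>
      rw [mem_descAux_zero] at hF
      have hxA : x ∈ A := hF ▸ hxF
      have : x ∈ ⋃₀ ((D (n+1) : Set (Set X))) := (hDcover (n+1)).symm ▸ mem_univ x
      obtain ⟨E, hE, hxE⟩ := this
      simp only [mem_iUnion, mem_setOf_eq, exists_prop]
      exact ⟨E, ⟨hE, ⟨x, hxA, hxE⟩⟩, subset_SsetAux hxE⟩
    | succ m =>
      rw [descAux_succ_eq] at hF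
      simp only [mem_iUnion, mem_setOf_eq, exists_prop] at hF
      obtain ⟨E, hE, hF⟩ := hF
      simp only [mem_iUnion, mem_setOf_eq, exists_prop]
      exact ⟨E, hE, mem_SsetAux_of_desc hF hxF⟩
  · intro x hx
    simp only [mem_iUnion, mem_setOf_eq, exists_prop] at hx
    obtain ⟨E, hE, hx⟩ := hx
    obtain ⟨m, F, hF, hxF⟩ := by simpa only [SsetAux, mem_iUnion, mem_sUnion] using hx
    have : F ∈ descAux D n A (m+1) := by
      rw [descAux_succ_eq]
      simp only [mem_iUnion, mem_setOf_eq, exists_prop]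
      exact ⟨E, hE, hF⟩
    exact mem_SsetAux_of_desc this hxF

lemma dist_le_of_desc [CompactSpace X]
    (hDmem : ∀ k, ∀ S ∈ D k, IsConnected S ∧ Metric.diam S ≤ (2:ℝ)⁻¹ ^ (k+1)) :
    ∀ m, ∀ F ∈ descAux D n A m, ∀ x ∈ F, ∃ y ∈ A,
      dist x y ≤ (2:ℝ)⁻¹ ^ (n+1) - (2:ℝ)⁻¹ ^ (n+m+1) := by
  intro m
  induction m with
  | zero =>
    intro F hF x hx
    rw [mem_descAux_zero] at hF
    exact ⟨x, hF ▸ hx, by simp⟩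
  | succ m ih =>
    intro F hF x hx
    rw [mem_descAux_succ] at hF
    obtain ⟨hFD, B, hB, z, hzB, hzF⟩ := hF
    obtain ⟨y, hy, hdy⟩ := ih B hB z hzB
    have hdF : Metric.diam F ≤ (2:ℝ)⁻¹ ^ (n+m+2) := (hDmem (n+m+1) F hFD).2
    have hxz : dist x z ≤ (2:ℝ)⁻¹ ^ (n+m+2) :=
      le_trans (dist_le_diam_of_mem isBounded_of_compactSpace hx hzF) hdF
    refine ⟨y, hy, ?_⟩
    have h1 : dist x y ≤ dist x z + dist z y := dist_triangle x z y
    have h2 : (2:ℝ)⁻¹ ^ (n+m+1) = (2:ℝ)⁻¹ ^ (n+m+2) + (2:ℝ)⁻¹ ^ (n+m+2) := by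
      rw [show n+m+2 = (n+m+1)+1 from rfl, pow_succ]
      ring
    show dist x y ≤ (2:ℝ)⁻¹ ^ (n+1) - (2:ℝ)⁻¹ ^ (n+m+2)
    linarith

lemma dist_le_of_mem_SsetAux [CompactSpace X]
    (hDmem : ∀ k, ∀ S ∈ D k, IsConnected S ∧ Metric.diam S ≤ (2:ℝ)⁻¹ ^ (k+1))
    {x : X} (hx : x ∈ SsetAux D n A) : ∃ y ∈ A, dist x y ≤ (2:ℝ)⁻¹ ^ (n+1) := by
  obtain ⟨m, F, hF, hxF⟩ := by simpa only [SsetAux, mem_iUnion, mem_sUnion] using hx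
  obtain ⟨y, hy, hd⟩ := dist_le_of_desc hDmem m F hF x hxF
  exact ⟨y, hy, le_trans hd (sub_le_self _ (by positivity))⟩

lemma diam_SsetAux_le [CompactSpace X]
    (hDmem : ∀ k, ∀ S ∈ D k, IsConnected S ∧ Metric.diam S ≤ (2:ℝ)⁻¹ ^ (k+1))
    (hA : Metric.diam A ≤ (2:ℝ)⁻¹ ^ (n+1)) :
    Metric.diam (SsetAux D n A) ≤ 3 * (2:ℝ)⁻¹ ^ (n+1) := by
  apply diam_le_of_forall_dist_le (by positivity)
  intro x hx x' hx'
  obtain ⟨y, hy, hd⟩ := dist_le_of_mem_SsetAux hDmem hx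
  obtain ⟨y', hy', hd'⟩ := dist_le_of_mem_SsetAux hDmem hx'
  have hyy' : dist y y' ≤ (2:ℝ)⁻¹ ^ (n+1) :=
    le_trans (dist_le_diam_of_mem isBounded_of_compactSpace hy hy') hA
  calc dist x x' ≤ dist x y + dist y y' + dist y' x' := dist_triangle4 x y y' x'
    _ ≤ (2:ℝ)⁻¹ ^ (n+1) + (2:ℝ)⁻¹ ^ (n+1) + (2:ℝ)⁻¹ ^ (n+1) := by
        rw [dist_comm y' x']; gcongr
    _ = 3 * (2:ℝ)⁻¹ ^ (n+1) := by ring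

lemma exists_preconnected_of_desc
    (hDmem : ∀ k, ∀ S ∈ D k, IsConnected S ∧ Metric.diam S ≤ (2:ℝ)⁻¹ ^ (k+1))
    (hA : IsConnected A) :
    ∀ m, ∀ F ∈ descAux D n A m, ∃ P : Set X,
      P ⊆ SsetAux D n A ∧ A ⊆ P ∧ F ⊆ P ∧ IsPreconnected P := by
  intro m
  induction m with
  | zero =>
    intro F hF
    rw [mem_descAux_zero] at hF
    exact ⟨A, subset_SsetAux, Subset.rfl, hF.subset, hA.isPreconnected⟩
  | succ m ih =>
    intro F hF
    have hF' := hF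
    rw [mem_descAux_succ] at hF'
    obtain ⟨hFD, B, hB, z, hzB, hzF⟩ := hF'
    obtain ⟨P, hPS, hAP, hBP, hPc⟩ := ih B hB
    refine ⟨P ∪ F, union_subset hPS (mem_SsetAux_of_desc hF),
      hAP.trans subset_union_left, subset_union_right, ?_⟩
    exact hPc.union z (hBP hzB) hzF (hDmem _ F hFD).1.isPreconnected

lemma isConnected_SsetAux
    (hDmem : ∀ k, ∀ S ∈ D k, IsConnected S ∧ Metric.diam S ≤ (2:ℝ)⁻¹ ^ (k+1))
    (hA : IsConnected A) : IsConnected (SsetAux D n A) := by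
  obtain ⟨x₀, hx₀⟩ := hA.nonempty
  refine ⟨⟨x₀, subset_SsetAux hx₀⟩, isPreconnected_of_forall x₀ ?_⟩
  intro y hy
  obtain ⟨m, F, hF, hyF⟩ := by simpa only [SsetAux, mem_iUnion, mem_sUnion] using hy
  obtain ⟨P, hPS, hAP, hFP, hPc⟩ := exists_preconnected_of_desc hDmem hA m F hF
  exact ⟨P, hPS, hAP hx₀, hFP hyF, hPc⟩

lemma isConnected_TsetAux
    (hDmem : ∀ k, ∀ S ∈ D k, IsConnected S ∧ Metric.diam S ≤ (2:ℝ)⁻¹ ^ (k+1))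
    (hA : IsConnected A) : IsConnected (TsetAux D n A) :=
  (isConnected_SsetAux hDmem hA).closure

open scoped Classical in
lemma TsetAux_eq (hDcover : ∀ k, ⋃₀ ((D k : Set (Set X))) = Set.univ) (n : ℕ) (A : Set X) :
    TsetAux D n A =
      ⋃ E ∈ ((D (n+1)).filter fun E => (A ∩ E).Nonempty), TsetAux D (n+1) E := by
  have hset : {E : Set X | E ∈ D (n+1) ∧ (A ∩ E).Nonempty}
      = ((D (n+1)).filter fun E => (A ∩ E).Nonempty : Finset (Set X)) := by
    ext E; simp [Finset.mem_filter]
  rw [TsetAux, SsetAux_eq hDcover, hset]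
  rw [show (⋃ E ∈ (((D (n+1)).filter fun E => (A ∩ E).Nonempty : Finset (Set X)) : Set (Set X)),
      SsetAux D (n+1) E) = ⋃ E ∈ ((D (n+1)).filter fun E => (A ∩ E).Nonempty),
      SsetAux D (n+1) E from by simp]
  exact Finset.closure_biUnion _ _

end Aux

/-- `SX X ε` is the smallest cardinality of a cover of `X` by connected subsets of
diameter `≤ ε`. -/
noncomputable def SX (X : Type*) [MetricSpace X] (ε : ℝ) : ℕ :=
  sInf {n : ℕ | ∃ 𝒞 : Finset (Set X), 𝒞.card = n ∧
    (∀ S ∈ 𝒞, IsConnected S ∧ Metric.diam S ≤ ε) ∧ ⋃₀ (𝒞 : Set (Set X)) = Set.univ}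

lemma exists_fin_cover (X : Type*) [MetricSpace X] [CompactSpace X] [LocallyConnectedSpace X]
    {ε : ℝ} (hε : 0 < ε) :
    ∃ 𝒞 : Finset (Set X), (∀ S ∈ 𝒞, IsConnected S ∧ Metric.diam S ≤ ε) ∧
      ⋃₀ ((𝒞 : Set (Set X))) = Set.univ := by
  classical
  have h : ∀ x : X, ∃ U : Set X, IsOpen U ∧ x ∈ U ∧ IsConnected U ∧ Metric.diam U ≤ ε := by
    intro x
    obtain ⟨V, hVsub, hVopen, hxV, hVconn⟩ :=
      locallyConnectedSpace_iff_subsets_isOpen_isConnected.mp ‹_› x (ball x (ε/2))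
        (ball_mem_nhds x (by positivity))
    refine ⟨V, hVopen, hxV, hVconn, ?_⟩
    calc Metric.diam V ≤ Metric.diam (ball x (ε/2)) :=
          diam_mono hVsub isBounded_of_compactSpace
      _ ≤ 2 * (ε/2) := diam_ball (by positivity)
      _ = ε := by ring
  choose U hUopen hxU hUconn hUdiam using h
  obtain ⟨t, ht⟩ := isCompact_univ.elim_finite_subcover U hUopen
    (fun x _ => mem_iUnion.2 ⟨x, hxU x⟩)
  refine ⟨t.image U, ?_, ?_⟩
  · intro S hS
    obtain ⟨x, _, rfl⟩ := Finset.mem_image.mp hS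
    exact ⟨hUconn x, hUdiam x⟩
  · apply Subset.antisymm (subset_univ _)
    intro x _
    obtain ⟨y, hy, hxy⟩ := by simpa using ht (mem_univ x)
    exact ⟨U y, by simp [Finset.mem_image]; exact ⟨y, hy, rfl⟩, hxy⟩

lemma SX_mem (X : Type*) [MetricSpace X] [CompactSpace X] [LocallyConnectedSpace X]
    {ε : ℝ} (hε : 0 < ε) :
    ∃ 𝒞 : Finset (Set X), 𝒞.card = SX X ε ∧
      (∀ S ∈ 𝒞, IsConnected S ∧ Metric.diam S ≤ ε) ∧ ⋃₀ ((𝒞 : Set (Set X))) = Set.univ := by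
  have hne : {n : ℕ | ∃ 𝒞 : Finset (Set X), 𝒞.card = n ∧
      (∀ S ∈ 𝒞, IsConnected S ∧ Metric.diam S ≤ ε) ∧
      ⋃₀ (𝒞 : Set (Set X)) = Set.univ}.Nonempty := by
    obtain ⟨𝒞, h1, h2⟩ := exists_fin_cover X hε
    exact ⟨𝒞.card, 𝒞, rfl, h1, h2⟩
  exact Nat.sInf_mem hne

/-- Every metric Peano continuum of diameter at most 1 possesses a nested sequence of
finite covers by closed connected sets with controlled cardinalities and meshes. -/
theorem exists_nested_covers (X : Type*) [MetricSpace X] [CompactSpace X] [ConnectedSpace X]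
    [LocallyConnectedSpace X] [Nonempty X] (hdiam : Metric.diam (Set.univ : Set X) ≤ 1) :
    ∃ 𝒞 : ℕ → Finset (Set X),
      𝒞 0 = {Set.univ} ∧
      (∀ n, ∀ S ∈ 𝒞 n, IsClosed S ∧ IsConnected S) ∧
      (∀ n, ⋃₀ ((𝒞 n : Set (Set X))) = Set.univ) ∧
      (∀ n ≥ 1, (𝒞 n).card ≤ SX X ((2:ℝ)⁻¹ ^ n)) ∧
      (∀ n ≥ 1, ∀ S ∈ 𝒞 n, Metric.diam S ≤ 3 * (2:ℝ)⁻¹ ^ n) ∧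
      (∀ n, ∀ C ∈ 𝒞 n, C = ⋃₀ {S : Set X | S ∈ 𝒞 (n + 1) ∧ S ⊆ C}) := by
  classical
  have hchoice : ∀ k : ℕ, ∃ 𝒟 : Finset (Set X), 𝒟.card = SX X ((2:ℝ)⁻¹ ^ (k+1)) ∧
      (∀ S ∈ 𝒟, IsConnected S ∧ Metric.diam S ≤ (2:ℝ)⁻¹ ^ (k+1)) ∧
      ⋃₀ ((𝒟 : Set (Set X))) = Set.univ := fun k => SX_mem X (by positivity)
  choose D hDcard hDmem hDcover using hchoice
  set 𝒞 : ℕ → Finset (Set X) := fun n => match n with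
    | 0 => {Set.univ}
    | (m+1) => (D m).image (TsetAux D m) with h𝒞
  have hmem𝒞 : ∀ m (S : Set X), S ∈ 𝒞 (m+1) ↔ ∃ A ∈ D m, TsetAux D m A = S := by
    intro m S; simp [h𝒞, Finset.mem_image]
  have hcover : ∀ n, ⋃₀ ((𝒞 n : Set (Set X))) = Set.univ := by
    intro n
    apply Subset.antisymm (subset_univ _)
    intro x _
    cases n with
    | zero => exact ⟨Set.univ, by simp [h𝒞], mem_univ x⟩
    | succ m =>
      have : x ∈ ⋃₀ ((D m : Set (Set X))) := (hDcover m).symm ▸ mem_univ x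
      obtain ⟨A, hA, hxA⟩ := this
      exact ⟨TsetAux D m A, by rw [Finset.mem_coe, hmem𝒞]; exact ⟨A, hA, rfl⟩,
        subset_closure (subset_SsetAux hxA)⟩
  refine ⟨𝒞, rfl, ?_, hcover, ?_, ?_, ?_⟩
  · -- closed and connected
    intro n S hS
    cases n with
    | zero =>
      rw [show 𝒞 0 = {Set.univ} from rfl, Finset.mem_singleton] at hS
      subst hS
      exact ⟨isClosed_univ, isConnected_univ⟩
    | succ m =>
      obtain ⟨A, hA, rfl⟩ := (hmem𝒞 m S).1 hS
      exact ⟨isClosed_closure, isConnected_TsetAux hDmem (hDmem m A hA).1⟩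
  · -- cardinality
    intro n hn
    obtain ⟨m, rfl⟩ : ∃ m, n = m + 1 := ⟨n - 1, (Nat.succ_pred_eq_of_pos hn).symm⟩
    calc (𝒞 (m+1)).card ≤ (D m).card := Finset.card_image_le
      _ = SX X ((2:ℝ)⁻¹ ^ (m+1)) := hDcard m
  · -- mesh
    intro n hn S hS
    obtain ⟨m, rfl⟩ : ∃ m, n = m + 1 := ⟨n - 1, (Nat.succ_pred_eq_of_pos hn).symm⟩
    obtain ⟨A, hA, rfl⟩ := (hmem𝒞 m S).1 hS
    rw [TsetAux, diam_closure]
    exact diam_SsetAux_le hDmem (hDmem m A hA).2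
  · -- nesting
    intro n C hC
    cases n with
    | zero =>
      rw [show 𝒞 0 = {Set.univ} from rfl, Finset.mem_singleton] at hC
      subst hC
      apply Subset.antisymm
      · intro x _
        have : x ∈ ⋃₀ ((𝒞 1 : Set (Set X))) := (hcover 1).symm ▸ mem_univ x
        obtain ⟨S, hS, hxS⟩ := this
        exact ⟨S, ⟨hS, subset_univ _⟩, hxS⟩
      · exact subset_univ _
    | succ m =>
      obtain ⟨A, hA, rfl⟩ := (hmem𝒞 m C).1 hC
      have key := TsetAux_eq (D := D) hDcover m A
      apply Subset.antisymm
      · intro x hx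
        rw [key] at hx
        simp only [mem_iUnion, exists_prop] at hx
        obtain ⟨E, hE, hxE⟩ := hx
        rw [Finset.mem_filter] at hE
        refine ⟨TsetAux D (m+1) E, ⟨?_, ?_⟩, hxE⟩
        · rw [hmem𝒞]; exact ⟨E, hE.1, rfl⟩
        · rw [key]
          intro y hy
          simp only [mem_iUnion, exists_prop]
          exact ⟨E, Finset.mem_filter.2 hE, hy⟩
      · rintro x ⟨S, ⟨_, hSC⟩, hxS⟩
        exact hSC hxS
end
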